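/- arXiv:quant-ph/0311039 — 2 statements merged into one kernel-verified Lean document; each statement's English description precedes it below -/
import Mathlib

section
/- Let M be an N×N complex matrix and I_N the N×N identity matrix. Then the squared Frobenius norm ‖M − I_N‖₂² is at least N − rank(M). -/
/-!
On the kernel of `M`, of dimension `N - rank M`, the map `M - 1` acts as `-1`, hence isometrically.
The sum `∑ ‖T eⱼ‖²` over an orthonormal basis is the Hilbert–Schmidt norm of `T`, which dominates
`∑ ‖T uᵢ‖²` for every orthonormal family `u` (Bessel's inequality applied to the adjoint); for an
orthonormal basis `u` of the kernel the latter sum is its dimension.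
-/

open Module LinearMap

section HilbertSchmidt

variable {𝕜 E F ι κ : Type*} [RCLike 𝕜]
  [NormedAddCommGroup E] [InnerProductSpace 𝕜 E] [FiniteDimensional 𝕜 E]
  [NormedAddCommGroup F] [InnerProductSpace 𝕜 F] [FiniteDimensional 𝕜 F]
  [Fintype ι] [Fintype κ]

theorem Orthonormal.sum_norm_sq_apply_le_sum_norm_sq_adjoint {u : κ → E} (hu : Orthonormal 𝕜 u)
    (c : OrthonormalBasis ι 𝕜 F) (T : E →ₗ[𝕜] F) :
    ∑ i, ‖T (u i)‖ ^ 2 ≤ ∑ l, ‖adjoint T (c l)‖ ^ 2 :=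
  calc ∑ i, ‖T (u i)‖ ^ 2 = ∑ l, ∑ i, ‖inner 𝕜 (u i) (adjoint T (c l))‖ ^ 2 := by
        simp_rw [← c.sum_sq_norm_inner_right (T _), adjoint_inner_right, norm_inner_symm]
        exact Finset.sum_comm
    _ ≤ ∑ l, ‖adjoint T (c l)‖ ^ 2 := Finset.sum_le_sum fun _ _ ↦ hu.sum_inner_products_le _

theorem Orthonormal.sum_norm_sq_apply_le {u : κ → E} (hu : Orthonormal 𝕜 u)
    (b : OrthonormalBasis ι 𝕜 E) (T : E →ₗ[𝕜] F) :
    ∑ i, ‖T (u i)‖ ^ 2 ≤ ∑ j, ‖T (b j)‖ ^ 2 := by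
  let c := stdOrthonormalBasis 𝕜 F
  calc ∑ i, ‖T (u i)‖ ^ 2 ≤ ∑ l, ‖adjoint T (c l)‖ ^ 2 :=
        hu.sum_norm_sq_apply_le_sum_norm_sq_adjoint c T
    _ ≤ ∑ j, ‖adjoint (adjoint T) (b j)‖ ^ 2 :=
        c.orthonormal.sum_norm_sq_apply_le_sum_norm_sq_adjoint b (adjoint T)
    _ = ∑ j, ‖T (b j)‖ ^ 2 := by rw [adjoint_adjoint]

theorem finrank_le_sum_norm_sq_apply_of_norm_map (K : Submodule 𝕜 E) (T : E →ₗ[𝕜] F)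
    (hT : ∀ v ∈ K, ‖T v‖ = ‖v‖) (b : OrthonormalBasis ι 𝕜 E) :
    (finrank 𝕜 K : ℝ) ≤ ∑ j, ‖T (b j)‖ ^ 2 := by
  let u := stdOrthonormalBasis 𝕜 K
  have hu : Orthonormal 𝕜 fun i ↦ (u i : E) := u.orthonormal.comp_linearIsometry K.subtypeₗᵢ
  calc (finrank 𝕜 K : ℝ) = ∑ i, ‖T (u i)‖ ^ 2 := by
        simp [hT _ (u _).2, hu.1]
    _ ≤ ∑ j, ‖T (b j)‖ ^ 2 := hu.sum_norm_sq_apply_le b T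

end HilbertSchmidt

namespace Matrix

variable {𝕜 m n : Type*} [RCLike 𝕜] [Fintype m] [Fintype n] [DecidableEq n]

theorem sum_norm_sq_toEuclideanLin_basisFun (A : Matrix m n 𝕜) :
    ∑ j, ‖toEuclideanLin A (EuclideanSpace.basisFun n 𝕜 j)‖ ^ 2 = ∑ i, ∑ j, ‖A i j‖ ^ 2 := by
  rw [Finset.sum_comm]
  refine Finset.sum_congr rfl fun j _ ↦ ?_
  rw [EuclideanSpace.norm_sq_eq]
  simp [toLpLin_apply, mulVec_single]

theorem rank_add_finrank_ker_toEuclideanLin (A : Matrix m n 𝕜) :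
    A.rank + finrank 𝕜 (ker (toEuclideanLin A)) = Fintype.card n := by
  rw [rank_eq_finrank_range_toLin A (EuclideanSpace.basisFun m 𝕜).toBasis
    (EuclideanSpace.basisFun n 𝕜).toBasis, ← toEuclideanLin_eq_toLin_orthonormal,
    finrank_range_add_finrank_ker, finrank_euclideanSpace]

end Matrix

/-- Hoffman–Wielandt corollary: for an `N × N` complex matrix `M`, the squared
Frobenius norm of `M - I` is at least `N - rank M`. -/
theorem frobenius_sq_sub_one_ge_card_sub_rank (N : ℕ) (M : Matrix (Fin N) (Fin N) ℂ) :
    (N : ℝ) - (M.rank : ℝ) ≤ ∑ i, ∑ j, ‖M i j - (1 : Matrix (Fin N) (Fin N) ℂ) i j‖ ^ 2 := by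
  set K := ker (Matrix.toEuclideanLin M)
  have hK : ∀ v ∈ K, ‖Matrix.toEuclideanLin (M - 1) v‖ = ‖v‖ := fun v hv ↦ by
    simp [map_sub, Matrix.toLpLin_one, mem_ker.mp hv]
  have hdim : (N : ℝ) = M.rank + finrank ℂ K := by
    exact_mod_cast (M.rank_add_finrank_ker_toEuclideanLin.trans (Fintype.card_fin N)).symm
  have hK_le := finrank_le_sum_norm_sq_apply_of_norm_map K _ hK (EuclideanSpace.basisFun _ ℂ)
  rw [Matrix.sum_norm_sq_toEuclideanLin_basisFun] at hK_le
  simpa only [Matrix.sub_apply, hdim, add_sub_cancel_left] using hK_le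
end

section
/- For any two N×N complex matrices M and P, the sum over i of (σᵢ(M) − σᵢ(P))² is at most ‖M − P‖₂², where σ₁(A) ≥ ⋯ ≥ σ_N(A) denote the singular values of A in decreasing order and ‖·‖₂ is the Frobenius norm. -/
/-!
Expanding both squares, and using that the squared singular values of `M` sum to `‖M‖₂²`, the
inequality becomes von Neumann's trace inequality `Re tr (M Pᴴ) ≤ ∑ σᵢ(M) σᵢ(P)`. With singular
value decompositions `M = U Σ_M V` and `P = W Σ_P X`, the trace is `∑ᵢⱼ σᵢ(M) σⱼ(P) Cᵢⱼ Aⱼᵢ` for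
unitary `A`, `C`, and `|Cᵢⱼ Aⱼᵢ| ≤ (|Cᵢⱼ|² + |Aⱼᵢ|²) / 2`, the entries of a doubly stochastic
matrix. By Birkhoff's theorem a bilinear form `x ⬝ᵥ S *ᵥ y` in similarly ordered vectors is
maximised over doubly stochastic `S` at a permutation matrix, hence, by the rearrangement
inequality, at the identity.
-/

open Finset Matrix RCLike ComplexConjugate

namespace Matrix

section DoublyStochastic

variable {R n : Type*} [Fintype n] [DecidableEq n]
  [Field R] [LinearOrder R] [IsStrictOrderedRing R]

theorem dotProduct_mulVec_le_of_mem_doublyStochastic {S : Matrix n n R}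
    (hS : S ∈ doublyStochastic R n) {x y : n → R} (hxy : Monovary x y) :
    x ⬝ᵥ S *ᵥ y ≤ x ⬝ᵥ y := by
  have hlin : IsLinearMap R fun T : Matrix n n R => x ⬝ᵥ T *ᵥ y :=
    ⟨fun T T' => by simp only [add_mulVec, dotProduct_add],
      fun c T => by simp only [smul_mulVec, dotProduct_smul]⟩
  rw [← SetLike.mem_coe, doublyStochastic_eq_convexHull_permMatrix] at hS
  refine convexHull_min ?_ (convex_halfSpace_le hlin _) hS
  rintro _ ⟨σ, rfl⟩
  simpa only [Set.mem_ofPred_eq, permMatrix_mulVec, dotProduct, Function.comp_apply] using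
    hxy.sum_mul_comp_perm_le_sum_mul

end DoublyStochastic

variable {m n 𝕜 : Type*} [Fintype m] [Fintype n] [RCLike 𝕜]

theorem sum_norm_sq_eq_re_trace_mul_conjTranspose (M : Matrix m n 𝕜) :
    ∑ i, ∑ j, ‖M i j‖ ^ 2 = re (trace (M * Mᴴ)) := by
  simp [trace, mul_apply, RCLike.mul_conj]

theorem sum_norm_sub_sq (M P : Matrix m n 𝕜) :
    ∑ i, ∑ j, ‖M i j - P i j‖ ^ 2 =
      ∑ i, ∑ j, ‖M i j‖ ^ 2 + ∑ i, ∑ j, ‖P i j‖ ^ 2 - 2 * re (trace (M * Pᴴ)) := by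
  have h : ∀ a b : 𝕜, ‖a - b‖ ^ 2 = ‖a‖ ^ 2 + ‖b‖ ^ 2 - 2 * re (a * conj b) := fun a b => by
    rw [@norm_sub_sq 𝕜, RCLike.inner_apply, sub_add_eq_add_sub, ← RCLike.conj_re, map_mul,
      RCLike.conj_conj, mul_comm (conj b)]
  simp only [h, trace, diag_apply, mul_apply, conjTranspose_apply, RCLike.star_def, map_sum,
    sum_sub_distrib, sum_add_distrib, mul_sum]

variable [DecidableEq n]

theorem norm_sq_entries_mem_doublyStochastic {U : Matrix n n 𝕜} (hU : U ∈ unitaryGroup n 𝕜) :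
    of (fun i j => ‖U i j‖ ^ 2) ∈ doublyStochastic ℝ n := by
  refine mem_doublyStochastic_iff_sum.2
    ⟨fun i j => by simp only [of_apply]; positivity, fun i => ?_, fun j => ?_⟩
  · have := congrFun₂ (mem_unitaryGroup_iff.1 hU) i i
    simp only [mul_apply, star_apply, RCLike.star_def, RCLike.mul_conj, one_apply_eq] at this
    exact_mod_cast this
  · have := congrFun₂ (mem_unitaryGroup_iff'.1 hU) j j
    simp only [mul_apply, star_apply, RCLike.star_def, RCLike.conj_mul, one_apply_eq] at this
    exact_mod_cast this

theorem sum_eigenvalues_mul_conjTranspose_self (M : Matrix n m 𝕜) :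
    ∑ i, (isHermitian_mul_conjTranspose_self M).eigenvalues i = ∑ i, ∑ j, ‖M i j‖ ^ 2 := by
  rw [sum_norm_sq_eq_re_trace_mul_conjTranspose,
    (isHermitian_mul_conjTranspose_self M).trace_eq_sum_eigenvalues]
  simp

omit [Fintype m] [DecidableEq n] in
theorem inner_toLp_row (B : Matrix m n 𝕜) (i j : m) :
    inner 𝕜 (WithLp.toLp 2 (B j)) (WithLp.toLp 2 (B i)) = (B * Bᴴ) i j := by
  simp [EuclideanSpace.inner_eq_star_dotProduct, mul_apply, dotProduct]

theorem exists_eq_diagonal_mul_unitary_of_mul_conjTranspose_eq_diagonal {B : Matrix n n 𝕜}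
    {s : n → ℝ} (hs : 0 ≤ s)
    (hB : B * Bᴴ = diagonal fun i => ((s i ^ 2 : ℝ) : 𝕜)) :
    ∃ V ∈ unitaryGroup n 𝕜, B = diagonal (fun i => (s i : 𝕜)) * V := by
  set b : n → EuclideanSpace 𝕜 n := fun i => WithLp.toLp 2 (B i)
  have hb : ∀ i j, inner 𝕜 (b i) (b j) = if i = j then ((s i ^ 2 : ℝ) : 𝕜) else 0 :=
    fun i j => by
      rw [inner_toLp_row, hB, diagonal_apply]
      split_ifs <;> simp_all
  have hnorm : ∀ i, ‖b i‖ = s i := fun i => by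
    rw [norm_eq_sqrt_re_inner (𝕜 := 𝕜), hb, if_pos rfl, ofReal_re, Real.sqrt_sq (hs i)]
  -- The rows of `B` are orthogonal of norms `s i`: the normalised nonzero ones extend to an
  -- orthonormal basis, whose vectors are the rows of `V`.
  set v : n → EuclideanSpace 𝕜 n := fun i => ((s i)⁻¹ : 𝕜) • b i
  have hv : Orthonormal 𝕜 ({i | s i ≠ 0}.domRestrict v) := by
    rw [orthonormal_iff_ite]
    rintro ⟨i, hi⟩ ⟨j, hj⟩
    simp only [Set.domRestrict_apply, v, inner_smul_left, inner_smul_right, hb, Subtype.mk.injEq]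
    split_ifs with h
    · subst h
      have : (s i : 𝕜) ≠ 0 := ofReal_ne_zero.2 hi
      simp only [map_inv₀, conj_ofReal, ofReal_pow]
      field_simp
    · simp
  obtain ⟨β, hβ⟩ := hv.exists_orthonormalBasis_extension_of_card_eq (by simp)
  refine ⟨of fun i j => β i j, ?_, ?_⟩
  · rw [mem_unitaryGroup_iff, star_eq_conjTranspose]
    ext i j
    rw [← inner_toLp_row]
    exact (orthonormal_iff_ite.1 β.orthonormal j i).trans (by simp [one_apply, eq_comm])
  · ext i j
    rw [diagonal_mul, of_apply]
    rcases eq_or_ne (s i) 0 with h | h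
    · have : b i = 0 := norm_eq_zero.1 ((hnorm i).trans h)
      simpa [h] using congrArg (fun x : EuclideanSpace 𝕜 n => x j) this
    · rw [hβ i h]
      simp [v, b, h]

theorem exists_svd_comp_perm (M : Matrix n n 𝕜) (e : Equiv.Perm n) :
    ∃ U ∈ unitaryGroup n 𝕜, ∃ V ∈ unitaryGroup n 𝕜, M = U *
      diagonal (fun i => (√((isHermitian_mul_conjTranspose_self M).eigenvalues (e i)) : 𝕜)) *
        V := by
  set hH := isHermitian_mul_conjTranspose_self M
  set U₀ : Matrix n n 𝕜 := (hH.eigenvectorUnitary : Matrix n n 𝕜)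
  set U : Matrix n n 𝕜 := U₀.submatrix id e
  have hUstar : star U = (star U₀).submatrix e id := conjTranspose_submatrix _ _ _
  have hU : U ∈ unitaryGroup n 𝕜 := by
    rw [mem_unitaryGroup_iff, hUstar, submatrix_mul_equiv,
      Unitary.mul_star_self_of_mem hH.eigenvectorUnitary.2, submatrix_id_id]
  have hdiag := hH.conjStarAlgAut_star_eigenvectorUnitary
  rw [Unitary.conjStarAlgAut_star_apply] at hdiag
  have hB : star U * M * (star U * M)ᴴ =
      diagonal fun i => ((√(hH.eigenvalues (e i)) ^ 2 : ℝ) : 𝕜) := by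
    calc star U * M * (star U * M)ᴴ = star U * (M * Mᴴ) * U := by
          simp only [conjTranspose_mul, star_eq_conjTranspose, conjTranspose_conjTranspose,
            Matrix.mul_assoc]
      _ = (star U₀ * (M * Mᴴ) * U₀).submatrix e e := by
          rw [hUstar, submatrix_mul _ _ e id e Function.bijective_id,
            submatrix_mul _ _ e id id Function.bijective_id, submatrix_id_id]
      _ = _ := by
          rw [hdiag, submatrix_diagonal_equiv]
          congr 1
          funext i
          simp [Real.sq_sqrt (eigenvalues_self_mul_conjTranspose_nonneg M (e i))]
  obtain ⟨V, hV, hBV⟩ := exists_eq_diagonal_mul_unitary_of_mul_conjTranspose_eq_diagonal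
    (fun i => Real.sqrt_nonneg _) hB
  refine ⟨U, hU, V, hV, ?_⟩
  rw [Matrix.mul_assoc, ← hBV, ← Matrix.mul_assoc, mem_unitaryGroup_iff.1 hU, Matrix.one_mul]

theorem sum_sq_sqrt_eigenvalues_comp_perm (M : Matrix n n 𝕜) (e : Equiv.Perm n) :
    ∑ i, √((isHermitian_mul_conjTranspose_self M).eigenvalues (e i)) ^ 2 =
      ∑ i, ∑ j, ‖M i j‖ ^ 2 := by
  simp only [Real.sq_sqrt (eigenvalues_self_mul_conjTranspose_nonneg M _)]
  rw [Equiv.sum_comp e, sum_eigenvalues_mul_conjTranspose_self]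

theorem re_trace_diagonal_mul_mul_diagonal_mul_le {A C : Matrix n n 𝕜}
    (hA : A ∈ unitaryGroup n 𝕜) (hC : C ∈ unitaryGroup n 𝕜) {a b : n → ℝ}
    (ha : 0 ≤ a) (hb : 0 ≤ b) (hab : Monovary a b) :
    re (trace (diagonal (fun i => (a i : 𝕜)) * C * diagonal (fun i => (b i : 𝕜)) * A)) ≤
      a ⬝ᵥ b := by
  set S : Matrix n n ℝ := (1 / 2 : ℝ) • of (fun i j => ‖C i j‖ ^ 2) +
    (1 / 2 : ℝ) • (of fun i j => ‖A i j‖ ^ 2)ᵀ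
  have hS : S ∈ doublyStochastic ℝ n :=
    convex_doublyStochastic (norm_sq_entries_mem_doublyStochastic hC)
      (transpose_mem_doublyStochastic_iff.2 (norm_sq_entries_mem_doublyStochastic hA))
      (by norm_num) (by norm_num) (by norm_num)
  have hentry : ∀ i,
      (diagonal (fun i => (a i : 𝕜)) * C * diagonal (fun i => (b i : 𝕜)) * A) i i =
        ∑ j, ((a i * b j : ℝ) : 𝕜) * (C i j * A j i) := fun i => by
    rw [mul_apply]
    simp only [mul_diagonal, diagonal_mul, ofReal_mul]
    exact sum_congr rfl fun j _ => by ring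
  calc re (trace _) = ∑ i, ∑ j, a i * b j * re (C i j * A j i) := by
        simp only [trace, diag_apply, hentry, map_sum, re_ofReal_mul]
    _ ≤ ∑ i, ∑ j, a i * b j * S i j := by
        gcongr with i _ j _
        · exact mul_nonneg (ha i) (hb j)
        calc re (C i j * A j i) ≤ ‖C i j‖ * ‖A j i‖ := (re_le_norm _).trans (norm_mul _ _).le
          _ ≤ S i j := by
            simp only [S, add_apply, smul_apply, of_apply, transpose_apply, smul_eq_mul]
            nlinarith [two_mul_le_add_sq ‖C i j‖ ‖A j i‖]
    _ = a ⬝ᵥ S *ᵥ b := by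
        simp only [dotProduct, mulVec, mul_sum, mul_assoc, mul_comm (b _)]
    _ ≤ a ⬝ᵥ b := dotProduct_mulVec_le_of_mem_doublyStochastic hS hab

theorem re_trace_mul_conjTranspose_le {M P : Matrix n n 𝕜} {a b : n → ℝ}
    (ha : 0 ≤ a) (hb : 0 ≤ b) (hab : Monovary a b)
    (hM : ∃ U ∈ unitaryGroup n 𝕜, ∃ V ∈ unitaryGroup n 𝕜,
      M = U * diagonal (fun i => (a i : 𝕜)) * V)
    (hP : ∃ W ∈ unitaryGroup n 𝕜, ∃ X ∈ unitaryGroup n 𝕜,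
      P = W * diagonal (fun i => (b i : 𝕜)) * X) :
    re (trace (M * Pᴴ)) ≤ a ⬝ᵥ b := by
  obtain ⟨U, hU, V, hV, rfl⟩ := hM
  obtain ⟨W, hW, X, hX, rfl⟩ := hP
  have hDb : (diagonal fun i => (b i : 𝕜))ᴴ = diagonal fun i => (b i : 𝕜) := by
    rw [diagonal_conjTranspose]
    exact congrArg diagonal (funext fun i => conj_ofReal (b i))
  have hcyc :
      U * diagonal (fun i => (a i : 𝕜)) * V * (W * diagonal (fun i => (b i : 𝕜)) * X)ᴴ =
        U * (diagonal (fun i => (a i : 𝕜)) * (V * star X) * diagonal (fun i => (b i : 𝕜)) *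
          star W) := by
    simp only [conjTranspose_mul, hDb, star_eq_conjTranspose, Matrix.mul_assoc]
  rw [hcyc, trace_mul_comm, Matrix.mul_assoc _ (star W)]
  exact re_trace_diagonal_mul_mul_diagonal_mul_le (mul_mem (Unitary.star_mem hW) hU)
    (mul_mem hV (Unitary.star_mem hX)) ha hb hab

end Matrix

/-- Hoffman–Wielandt inequality for singular values: if `σM` and `σP` are the
singular values of `M` and `P` (square roots of the eigenvalues of `M * Mᴴ`,
resp. `P * Pᴴ`) listed in decreasing order, then
`∑ i (σM i - σP i)² ≤ ‖M - P‖₂²` (squared Frobenius norm). -/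
theorem hoffman_wielandt_singular_values (N : ℕ) (M P : Matrix (Fin N) (Fin N) ℂ)
    (σM σP : Fin N → ℝ) (hM : Antitone σM) (hP : Antitone σP)
    (hMe : ∃ e : Equiv.Perm (Fin N), ∀ i,
      σM i = Real.sqrt ((Matrix.isHermitian_mul_conjTranspose_self M).eigenvalues (e i)))
    (hPe : ∃ e : Equiv.Perm (Fin N), ∀ i,
      σP i = Real.sqrt ((Matrix.isHermitian_mul_conjTranspose_self P).eigenvalues (e i))) :
    ∑ i, (σM i - σP i) ^ 2 ≤ ∑ i, ∑ j, ‖M i j - P i j‖ ^ 2 := by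
  obtain ⟨e, he⟩ := hMe
  obtain ⟨f, hf⟩ := hPe
  obtain rfl : σM = _ := funext he
  obtain rfl : σP = _ := funext hf
  have hvN := re_trace_mul_conjTranspose_le (fun _ => Real.sqrt_nonneg _)
    (fun _ => Real.sqrt_nonneg _) (hM.monovary hP) (exists_svd_comp_perm M e)
    (exists_svd_comp_perm P f)
  have hexpand : ∀ a b : ℝ, (a - b) ^ 2 = a ^ 2 + b ^ 2 - 2 * (a * b) := fun a b => by ring
  rw [sum_norm_sub_sq, ← sum_sq_sqrt_eigenvalues_comp_perm M e,
    ← sum_sq_sqrt_eigenvalues_comp_perm P f]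
  simp only [hexpand, sum_sub_distrib, sum_add_distrib, ← mul_sum]
  exact sub_le_sub_left (mul_le_mul_of_nonneg_left hvN two_pos.le) _
end
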